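/- arXiv:2101.08099 — 4 statements merged into one kernel-verified Lean document; each statement's English description precedes it below -/
import Mathlib

section
/- For p ≥ 2 and any vectors w₁, w₂ ∈ ℝⁿ, one has |w₂|^p ≥ |w₁|^p + p|w₁|^{p-2}⟨w₁, w₂ - w₁⟩ + |w₂ - w₁|^p/(2^{p-1} - 1). -/
/-!
Let `D(a, b)` be the Bregman divergence of `‖·‖ ^ p`. For the midpoint `m` of `a` and `b`,
Clarkson's inequality gives `D(a, b) ≥ 2 D(a, m) + 2 ^ (1 - p) ‖b - a‖ ^ p`, while
`‖m - a‖ ^ p = 2 ^ (-p) ‖b - a‖ ^ p`. So any constant `c` with `D(a, b) ≥ c ‖b - a‖ ^ p`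
improves to `2 ^ (1 - p) (c + 1)`; starting from `D ≥ 0`, the constants are the partial sums of
`∑_{i ≥ 1} 2 ^ ((1 - p) i) = 1 / (2 ^ (p - 1) - 1)`.
-/

open Real Finset

lemma Real.rpow_add_mul_rpow_sub_one_mul_sub_le {a t r : ℝ} (ha : 0 ≤ a) (ht : 0 ≤ t)
    (hr : 1 ≤ r) : a ^ r + r * a ^ (r - 1) * (t - a) ≤ t ^ r := by
  rcases ha.eq_or_lt with rfl | ha
  · rcases hr.eq_or_lt with rfl | hr
    · simp
    · simp [zero_rpow (by linarith : r ≠ 0), zero_rpow (by linarith : r - 1 ≠ 0),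
        rpow_nonneg ht]
  · have bernoulli := one_add_mul_self_le_rpow_one_add (s := t / a - 1)
      (by linarith [div_nonneg ht ha.le]) hr
    rw [add_sub_cancel] at bernoulli
    calc a ^ r + r * a ^ (r - 1) * (t - a) = a ^ r * (1 + r * (t / a - 1)) := by
          rw [rpow_sub_one ha.ne']; field_simp
      _ ≤ a ^ r * (t / a) ^ r := by gcongr
      _ = t ^ r := by rw [← mul_rpow ha.le (by positivity), mul_div_cancel₀ _ ha.ne']

lemma Real.two_rpow_eq_two_mul_two_rpow_sub_one (p : ℝ) : (2 : ℝ) ^ p = 2 * 2 ^ (p - 1) := by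
  rw [rpow_sub_one two_ne_zero]; ring

section

variable {E : Type*} [SeminormedAddCommGroup E] [InnerProductSpace ℝ E]

lemma clarkson_inequality {p : ℝ} (hp : 2 ≤ p) (a b : E) :
    ‖(2⁻¹ : ℝ) • (a + b)‖ ^ p + ‖(2⁻¹ : ℝ) • (a - b)‖ ^ p ≤ (‖a‖ ^ p + ‖b‖ ^ p) / 2 := by
  have hp2 : 1 ≤ p / 2 := by linarith
  have sq_rpow_half {x : ℝ} (hx : 0 ≤ x) : (x ^ 2) ^ (p / 2) = x ^ p := by
    rw [← rpow_natCast, ← rpow_mul hx]; ring_nf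
  have parallelogram : ‖(2⁻¹ : ℝ) • (a + b)‖ ^ 2 + ‖(2⁻¹ : ℝ) • (a - b)‖ ^ 2
      = 2⁻¹ * ‖a‖ ^ 2 + 2⁻¹ * ‖b‖ ^ 2 := by
    simp only [norm_smul, mul_pow, norm_inv, RCLike.norm_ofNat]
    linear_combination (1 / 4 : ℝ) * parallelogram_law_with_norm ℝ a b
  have midpoint_convex := (convexOn_rpow hp2).2 (Set.mem_Ici.2 (sq_nonneg ‖a‖))
    (Set.mem_Ici.2 (sq_nonneg ‖b‖)) (by norm_num : (0 : ℝ) ≤ 2⁻¹) (by norm_num : (0 : ℝ) ≤ 2⁻¹)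
    (by norm_num)
  simp only [smul_eq_mul] at midpoint_convex
  calc _ = (‖(2⁻¹ : ℝ) • (a + b)‖ ^ 2) ^ (p / 2) + (‖(2⁻¹ : ℝ) • (a - b)‖ ^ 2) ^ (p / 2) := by
        rw [sq_rpow_half (norm_nonneg _), sq_rpow_half (norm_nonneg _)]
    _ ≤ (2⁻¹ * ‖a‖ ^ 2 + 2⁻¹ * ‖b‖ ^ 2) ^ (p / 2) := by
        rw [← parallelogram]; exact add_rpow_le_rpow_add (by positivity) (by positivity) hp2
    _ ≤ 2⁻¹ * (‖a‖ ^ 2) ^ (p / 2) + 2⁻¹ * (‖b‖ ^ 2) ^ (p / 2) := midpoint_convex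
    _ = (‖a‖ ^ p + ‖b‖ ^ p) / 2 := by
        rw [sq_rpow_half (norm_nonneg a), sq_rpow_half (norm_nonneg b)]; ring

/-- The Bregman divergence of `x ↦ ‖x‖ ^ p` at `a`. -/
noncomputable def rpowBregman (p : ℝ) (a b : E) : ℝ :=
  ‖b‖ ^ p - ‖a‖ ^ p - p * ‖a‖ ^ (p - 2) * inner ℝ a (b - a)

lemma rpowBregman_nonneg {p : ℝ} (hp : 1 ≤ p) (a b : E) : 0 ≤ rpowBregman p a b := by
  unfold rpowBregman
  rcases eq_or_ne ‖a‖ 0 with ha | ha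
  · have inner_eq_zero : inner ℝ a (b - a) = 0 := by
      simpa [ha] using abs_real_inner_le_norm a (b - a)
    simp [ha, inner_eq_zero, zero_rpow (by linarith : p ≠ 0), rpow_nonneg (norm_nonneg b)]
  have ha : 0 < ‖a‖ := (norm_nonneg a).lt_of_ne' ha
  have tangent := rpow_add_mul_rpow_sub_one_mul_sub_le (norm_nonneg a) (norm_nonneg b) hp
  have inner_le : p * ‖a‖ ^ (p - 2) * inner ℝ a (b - a) ≤ p * ‖a‖ ^ (p - 1) * (‖b‖ - ‖a‖) := by
    calc p * ‖a‖ ^ (p - 2) * inner ℝ a (b - a)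
        ≤ p * ‖a‖ ^ (p - 2) * (‖a‖ * ‖b‖ - ‖a‖ ^ 2) := by
          rw [inner_sub_right, real_inner_self_eq_norm_sq]
          gcongr; exact real_inner_le_norm a b
      _ = p * ‖a‖ ^ (p - 1) * (‖b‖ - ‖a‖) := by
          rw [show p - 1 = p - 2 + 1 by ring, rpow_add_one ha.ne']; ring
  linarith

lemma norm_inv_two_smul_rpow (p : ℝ) (x : E) : ‖(2⁻¹ : ℝ) • x‖ ^ p = ‖x‖ ^ p / 2 ^ p := by
  rw [norm_smul, mul_rpow (norm_nonneg _) (norm_nonneg _), norm_inv, RCLike.norm_ofNat,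
    inv_rpow zero_le_two, inv_mul_eq_div]

lemma two_mul_rpowBregman_midpoint_add_le {p : ℝ} (hp : 2 ≤ p) (a b : E) :
    2 * rpowBregman p a ((2⁻¹ : ℝ) • (a + b)) + ‖b - a‖ ^ p / 2 ^ (p - 1)
      ≤ rpowBregman p a b := by
  have half_sub : (2⁻¹ : ℝ) • (a + b) - a = (2⁻¹ : ℝ) • (b - a) := by module
  have clarkson := clarkson_inequality hp a b
  rw [← neg_sub b a, smul_neg, norm_neg] at clarkson
  unfold rpowBregman
  rw [half_sub, real_inner_smul_right]
  simp only [norm_inv_two_smul_rpow] at clarkson ⊢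
  rw [two_rpow_eq_two_mul_two_rpow_sub_one p] at clarkson ⊢
  field_simp at clarkson ⊢
  linarith

lemma geom_sum_mul_le_rpowBregman {p : ℝ} (hp : 2 ≤ p) (k : ℕ) (a b : E) :
    (2 ^ (p - 1))⁻¹ * (∑ i ∈ range k, ((2 : ℝ) ^ (p - 1))⁻¹ ^ i) * ‖b - a‖ ^ p
      ≤ rpowBregman p a b := by
  induction k generalizing b with
  | zero => simpa using rpowBregman_nonneg (by linarith) a b
  | succ k ih =>
    have half_sub : (2⁻¹ : ℝ) • (a + b) - a = (2⁻¹ : ℝ) • (b - a) := by module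
    have ih := ih ((2⁻¹ : ℝ) • (a + b))
    rw [half_sub, norm_inv_two_smul_rpow, two_rpow_eq_two_mul_two_rpow_sub_one p] at ih
    have step := two_mul_rpowBregman_midpoint_add_le hp a b
    rw [geom_sum_succ]
    set q : ℝ := 2 ^ (p - 1)
    have hq : q ≠ 0 := by positivity
    calc q⁻¹ * (q⁻¹ * (∑ i ∈ range k, q⁻¹ ^ i) + 1) * ‖b - a‖ ^ p
        = 2 * (q⁻¹ * (∑ i ∈ range k, q⁻¹ ^ i) * (‖b - a‖ ^ p / (2 * q))) + ‖b - a‖ ^ p / q := by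
          field_simp
      _ ≤ rpowBregman p a b := by linarith

lemma norm_sub_rpow_div_le_rpowBregman {p : ℝ} (hp : 2 ≤ p) (a b : E) :
    ‖b - a‖ ^ p / (2 ^ (p - 1) - 1) ≤ rpowBregman p a b := by
  have hq : (1 : ℝ) < 2 ^ (p - 1) := one_lt_rpow one_lt_two (by linarith)
  have geometric := hasSum_geometric_of_lt_one (inv_nonneg.2 (zero_le_one.trans hq.le))
    (inv_lt_one_of_one_lt₀ hq)
  have limit : ((2 : ℝ) ^ (p - 1))⁻¹ * (1 - (2 ^ (p - 1))⁻¹)⁻¹ = (2 ^ (p - 1) - 1)⁻¹ := by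
    field_simp
  rw [div_eq_mul_inv, mul_comm, ← limit]
  exact le_of_tendsto' ((geometric.tendsto_sum_nat.const_mul _).mul_const _)
    (geom_sum_mul_le_rpowBregman hp · a b)

end

theorem convexity_ineq_p_ge_two (n : ℕ) (p : ℝ) (hp : 2 ≤ p)
    (w₁ w₂ : EuclideanSpace ℝ (Fin n)) :
    ‖w₂‖ ^ p ≥ ‖w₁‖ ^ p
      + p * ‖w₁‖ ^ (p - 2) * (inner ℝ w₁ (w₂ - w₁) : ℝ)
      + ‖w₂ - w₁‖ ^ p / (2 ^ (p - 1) - 1) := by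
  have := norm_sub_rpow_div_le_rpowBregman hp w₁ w₂
  unfold rpowBregman at this
  linarith
end

section
/- For 1 < p < 2 there exists a constant C(p) > 0 such that for all vectors w₁, w₂ ∈ ℝⁿ not both zero: |w₂|^p ≥ |w₁|^p + p|w₁|^{p-2}⟨w₁, w₂ - w₁⟩ + C(p)·|w₂ - w₁|²/(|w₁| + |w₂|)^{2-p}. -/
/-!
For `1 < p ≤ 2` the map `J x = ‖x‖ ^ (p - 2) • x` (the gradient of `‖x‖ ^ p / p`) satisfies
`⟪J x - J y, x - y⟫ ≥ (p - 1) ‖x - y‖² (‖x‖ + ‖y‖) ^ (p - 2)`. Both sides are affine in `⟪x, y⟫`,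
so this reduces to the collinear cases, which are one-variable inequalities for `a ↦ a ^ (p - 1)`
(weighted AM-GM and subadditivity). Along the segment `w₁ + t (w₂ - w₁)` all norms are at most
`‖w₁‖ + ‖w₂‖`, so the derivative of `t ↦ ‖w₁ + t (w₂ - w₁)‖ ^ p` exceeds its value at `0` by at
least `p (p - 1) t ‖w₂ - w₁‖² (2 (‖w₁‖ + ‖w₂‖)) ^ (p - 2)`; integrating gives the theorem with
`C = p (p - 1) 2 ^ (p - 3)`.
-/

open Real Set
open scoped InnerProductSpace

section Scalar

variable {p a b : ℝ}

lemma rpow_sub_one_eq_rpow_sub_two_mul {x : ℝ} (hx : 0 ≤ x) (hp : p ≠ 1) :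
    x ^ (p - 1) = x ^ (p - 2) * x := by
  rw [← rpow_add_one' hx (by contrapose! hp; linarith)]
  ring_nf

lemma mul_sub_mul_rpow_le_rpow_sub_rpow (hp1 : 1 ≤ p) (hp2 : p ≤ 2) (hb : 0 ≤ b) (hba : b ≤ a) :
    (p - 1) * (a - b) * (a + b) ^ (p - 2) ≤ a ^ (p - 1) - b ^ (p - 1) := by
  obtain rfl | ha := (hb.trans hba).eq_or_lt
  · obtain rfl : b = 0 := le_antisymm hba hb
    simp
  have hab : 0 < a + b := by linarith
  have amgm : b ^ (p - 1) * a ^ (2 - p) ≤ (p - 1) * b + (2 - p) * a :=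
    geom_mean_le_arith_mean2_weighted (by linarith) (by linarith) hb ha.le (by ring)
  have ha_split : a ^ (p - 1) * a ^ (2 - p) = a := by
    rw [← rpow_add ha]; norm_num
  have hdiff : 0 ≤ a ^ (p - 1) - b ^ (p - 1) :=
    sub_nonneg.2 (rpow_le_rpow hb hba (by linarith))
  have key : (p - 1) * (a - b) ≤ (a ^ (p - 1) - b ^ (p - 1)) * (a + b) ^ (2 - p) :=
    calc (p - 1) * (a - b) ≤ (a ^ (p - 1) - b ^ (p - 1)) * a ^ (2 - p) := by
          rw [sub_mul _ _ (a ^ (2 - p)), ha_split]; linarith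
      _ ≤ _ := mul_le_mul_of_nonneg_left (rpow_le_rpow ha.le (by linarith) (by linarith)) hdiff
  rw [show p - 2 = -(2 - p) by ring, rpow_neg hab.le, ← div_eq_mul_inv,
    div_le_iff₀ (rpow_pos_of_pos hab _)]
  exact key

lemma mul_sq_sub_mul_rpow_le (hp1 : 1 ≤ p) (hp2 : p ≤ 2) (ha : 0 ≤ a) (hb : 0 ≤ b) :
    (p - 1) * (a - b) ^ 2 * (a + b) ^ (p - 2) ≤ (a ^ (p - 1) - b ^ (p - 1)) * (a - b) := by
  rcases le_total b a with hba | hab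
  · have := mul_sub_mul_rpow_le_rpow_sub_rpow hp1 hp2 hb hba
    nlinarith
  · have := mul_sub_mul_rpow_le_rpow_sub_rpow hp1 hp2 ha hab
    rw [add_comm] at this
    nlinarith

lemma mul_sq_add_mul_rpow_le (hp1 : 1 < p) (hp2 : p ≤ 2) (ha : 0 ≤ a) (hb : 0 ≤ b) :
    (p - 1) * (a + b) ^ 2 * (a + b) ^ (p - 2) ≤ (a ^ (p - 1) + b ^ (p - 1)) * (a + b) := by
  have hab : 0 ≤ a + b := add_nonneg ha hb
  have hsub : (a + b) ^ (p - 1) ≤ a ^ (p - 1) + b ^ (p - 1) :=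
    rpow_add_le_add_rpow ha hb (by linarith) (by linarith)
  calc (p - 1) * (a + b) ^ 2 * (a + b) ^ (p - 2) = (p - 1) * ((a + b) ^ (p - 1) * (a + b)) := by
        rw [rpow_sub_one_eq_rpow_sub_two_mul hab hp1.ne']; ring
    _ ≤ 1 * ((a + b) ^ (p - 1) * (a + b)) := by gcongr; linarith
    _ ≤ _ := by rw [one_mul]; gcongr

end Scalar

lemma add_add_le_of_hasDerivAt_of_mul_le_sub {φ φ' : ℝ → ℝ} {K : ℝ}
    (hφ : ∀ t, HasDerivAt φ (φ' t) t) (hgrowth : ∀ t ∈ Ioo (0 : ℝ) 1, 2 * K * t ≤ φ' t - φ' 0) :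
    φ 0 + φ' 0 + K ≤ φ 1 := by
  set G : ℝ → ℝ := fun t => φ t - φ' 0 * t - K * t ^ 2
  have hG : ∀ t, HasDerivAt G (φ' t - φ' 0 - K * (2 * t)) t := fun t => by
    refine (((hφ t).sub ((hasDerivAt_id t).const_mul (φ' 0))).sub
      ((hasDerivAt_pow 2 t).const_mul K)).congr_deriv ?_
    simp
  have hmono : MonotoneOn G (Icc 0 1) :=
    monotoneOn_of_hasDerivWithinAt_nonneg (convex_Icc 0 1)
      (fun t _ => (hG t).continuousAt.continuousWithinAt) (fun t _ => (hG t).hasDerivWithinAt)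
      (fun t ht => by rw [interior_Icc] at ht; linarith [hgrowth t ht])
  have hG01 := hmono (left_mem_Icc.2 zero_le_one) (right_mem_Icc.2 zero_le_one) zero_le_one
  simp only [G] at hG01
  linarith

lemma norm_add_smul_sub_le_add {F : Type*} [SeminormedAddCommGroup F] [NormedSpace ℝ F] {t : ℝ}
    (ht0 : 0 ≤ t) (ht1 : t ≤ 1) (x y : F) :
    ‖x + t • (y - x)‖ ≤ ‖x‖ + ‖y‖ := by
  rw [show x + t • (y - x) = (1 - t) • x + t • y by module]
  refine (norm_add_le _ _).trans ?_
  rw [norm_smul_of_nonneg (by linarith), norm_smul_of_nonneg ht0]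
  nlinarith [norm_nonneg x, norm_nonneg y]

section InnerProductSpace

variable {E : Type*} [NormedAddCommGroup E] [InnerProductSpace ℝ E] {p : ℝ}

lemma mul_norm_sub_sq_mul_rpow_le_inner (hp1 : 1 < p) (hp2 : p ≤ 2) (x y : E) :
    (p - 1) * ‖x - y‖ ^ 2 * (‖x‖ + ‖y‖) ^ (p - 2)
      ≤ ⟪‖x‖ ^ (p - 2) • x - ‖y‖ ^ (p - 2) • y, x - y⟫_ℝ := by
  set a := ‖x‖
  set b := ‖y‖
  set I := ⟪x, y⟫_ℝ
  have hI := abs_le.1 (abs_real_inner_le_norm x y)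
  have hxa : a ^ (p - 1) = a ^ (p - 2) * a :=
    rpow_sub_one_eq_rpow_sub_two_mul (norm_nonneg x) hp1.ne'
  have hyb : b ^ (p - 1) = b ^ (p - 2) * b :=
    rpow_sub_one_eq_rpow_sub_two_mul (norm_nonneg y) hp1.ne'
  have aligned := mul_sq_sub_mul_rpow_le hp1.le hp2 (norm_nonneg x) (norm_nonneg y)
  have opposed := mul_sq_add_mul_rpow_le hp1 hp2 (norm_nonneg x) (norm_nonneg y)
  have hrhs : ⟪a ^ (p - 2) • x - b ^ (p - 2) • y, x - y⟫_ℝ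
      = a ^ (p - 2) * (a ^ 2 - I) - b ^ (p - 2) * (I - b ^ 2) := by
    simp only [inner_sub_left, inner_sub_right, real_inner_smul_left, real_inner_self_eq_norm_sq,
      real_inner_comm x y, a, b, I]
    ring
  rw [hrhs, norm_sub_sq_real]
  rw [hxa, hyb] at aligned opposed
  set P := (p - 1) * (a + b) ^ (p - 2)
  set u := a ^ (p - 2)
  set v := b ^ (p - 2)
  have hP : 0 ≤ P := by positivity
  rcases le_total 0 (u + v - 2 * P) with hslope | hslope
  · nlinarith
  · nlinarith

lemma mul_norm_sub_sq_mul_rpow_le_inner_of_le (hp1 : 1 < p) (hp2 : p ≤ 2) {x y : E} {R : ℝ}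
    (hR : ‖x‖ + ‖y‖ ≤ R) :
    (p - 1) * ‖x - y‖ ^ 2 * R ^ (p - 2)
      ≤ ⟪‖x‖ ^ (p - 2) • x - ‖y‖ ^ (p - 2) • y, x - y⟫_ℝ := by
  obtain hxy | hxy := (add_nonneg (norm_nonneg x) (norm_nonneg y)).eq_or_lt
  · have hx : x = 0 := norm_eq_zero.1 (by linarith [norm_nonneg x, norm_nonneg y])
    have hy : y = 0 := norm_eq_zero.1 (by linarith [norm_nonneg x, norm_nonneg y])
    simp [hx, hy]
  refine le_trans ?_ (mul_norm_sub_sq_mul_rpow_le_inner hp1 hp2 x y)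
  exact mul_le_mul_of_nonneg_left (rpow_le_rpow_of_nonpos hxy hR (by linarith))
    (mul_nonneg (by linarith) (sq_nonneg _))

lemma hasDerivAt_norm_add_smul_rpow (hp : 1 < p) (w δ : E) (t : ℝ) :
    HasDerivAt (fun s : ℝ => ‖w + s • δ‖ ^ p)
      (p * ⟪‖w + t • δ‖ ^ (p - 2) • (w + t • δ), δ⟫_ℝ) t := by
  have hline : HasDerivAt (fun s : ℝ => w + s • δ) δ t := by
    simpa using ((hasDerivAt_id t).smul_const δ).const_add w
  refine ((hasFDerivAt_norm_rpow (w + t • δ) hp).comp_hasDerivAt t hline).congr_deriv ?_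
  simp only [smul_apply, innerSL_apply_apply, smul_eq_mul, real_inner_smul_left, mul_assoc]

theorem norm_rpow_add_inner_add_le (hp1 : 1 < p) (hp2 : p ≤ 2) (w₁ w₂ : E) :
    ‖w₁‖ ^ p + p * ‖w₁‖ ^ (p - 2) * ⟪w₁, w₂ - w₁⟫_ℝ
      + p * (p - 1) / 2 * ‖w₂ - w₁‖ ^ 2 * (2 * (‖w₁‖ + ‖w₂‖)) ^ (p - 2) ≤ ‖w₂‖ ^ p := by
  set δ := w₂ - w₁
  set R := 2 * (‖w₁‖ + ‖w₂‖)
  set φ' : ℝ → ℝ := fun t => p * ⟪‖w₁ + t • δ‖ ^ (p - 2) • (w₁ + t • δ), δ⟫_ℝ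
  have growth : ∀ t ∈ Ioo (0 : ℝ) 1,
      2 * (p * (p - 1) / 2 * ‖δ‖ ^ 2 * R ^ (p - 2)) * t ≤ φ' t - φ' 0 := by
    rintro t ⟨ht0, ht1⟩
    have hR : ‖w₁ + t • δ‖ + ‖w₁‖ ≤ R := by
      linarith [norm_add_smul_sub_le_add ht0.le ht1.le w₁ w₂, norm_nonneg w₂]
    have hmono := mul_norm_sub_sq_mul_rpow_le_inner_of_le hp1 hp2 hR
    rw [add_sub_cancel_left, norm_smul, real_inner_smul_right, norm_of_nonneg ht0.le] at hmono
    have hlinear : (p - 1) * ‖δ‖ ^ 2 * R ^ (p - 2) * t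
        ≤ ⟪‖w₁ + t • δ‖ ^ (p - 2) • (w₁ + t • δ) - ‖w₁‖ ^ (p - 2) • w₁, δ⟫_ℝ :=
      le_of_mul_le_mul_left (by linarith) ht0
    simp only [φ', zero_smul, add_zero, ← mul_sub, ← inner_sub_left]
    linarith [mul_le_mul_of_nonneg_left hlinear (by linarith : 0 ≤ p)]
  have htaylor :=
    add_add_le_of_hasDerivAt_of_mul_le_sub (hasDerivAt_norm_add_smul_rpow hp1 w₁ δ) growth
  simpa [φ', δ, real_inner_smul_left, mul_assoc] using htaylor

end InnerProductSpace

theorem convexity_ineq_p_lt_two (n : ℕ) (p : ℝ) (hp1 : 1 < p) (hp2 : p < 2) :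
    ∃ C : ℝ, 0 < C ∧ ∀ w₁ w₂ : EuclideanSpace ℝ (Fin n), ¬(w₁ = 0 ∧ w₂ = 0) →
      ‖w₂‖ ^ p ≥ ‖w₁‖ ^ p
        + p * ‖w₁‖ ^ (p - 2) * (inner ℝ w₁ (w₂ - w₁) : ℝ)
        + C * ‖w₂ - w₁‖ ^ 2 / (‖w₁‖ + ‖w₂‖) ^ (2 - p) := by
  refine ⟨p * (p - 1) * 2 ^ (p - 3), by positivity, fun w₁ w₂ _ => ?_⟩
  have hS : 0 ≤ ‖w₁‖ + ‖w₂‖ := by positivity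
  have hC : p * (p - 1) * 2 ^ (p - 3) * ‖w₂ - w₁‖ ^ 2 / (‖w₁‖ + ‖w₂‖) ^ (2 - p)
      = p * (p - 1) / 2 * ‖w₂ - w₁‖ ^ 2 * (2 * (‖w₁‖ + ‖w₂‖)) ^ (p - 2) := by
    rw [mul_rpow zero_le_two hS, show p - 2 = (p - 3) + 1 by ring, rpow_add_one two_ne_zero,
      show p - 3 + 1 = -(2 - p) by ring, rpow_neg hS]
    ring
  rw [ge_iff_le, hC]
  exact norm_rpow_add_inner_add_le hp1 hp2.le w₁ w₂
end

section
/- Let p > 1, and fix n ≥ 2, k > 0 with k ≤ n(p-1)/((n-2)p + n). Define F(l) = ∫₀^l ω^δ (∫₀^ω f*(s) ds)^{1/(p-1)} dω where δ = 1/k - (n-1)p/(n(p-1)) and f* : [0,∞) → [0,∞) is nonnegative and measurable. Then the function h(l) = F(l)·l^{-(n-1)p/(n(p-1))} is non-decreasing on (0, ∞). -/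
open MeasureTheory Set

/-! Substituting `ω = l t` gives, with `φ = (∫₀^ω f*)^(1/(p-1))` and `γ = (n-1)p/(n(p-1))`,
`F(l) l^(-γ) = l^(δ+1-γ) ∫₀¹ t^δ φ(l t) dt`. Both factors are nonnegative and nondecreasing in `l`:
the integral because `φ` is, the power because the bound on `k` says exactly `γ ≤ δ + 1`. -/

theorem monotone_setIntegral_Ioc_zero {f : ℝ → ℝ} (hf : LocallyIntegrable f)
    (hf₀ : ∀ x, 0 ≤ f x) : Monotone fun x => ∫ s in Ioc 0 x, f s := fun _ _ hxy =>
  setIntegral_mono_set ((hf.integrableOn_isCompact isCompact_Icc).mono_set Ioc_subset_Icc_self)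
    (.of_forall hf₀) (Ioc_subset_Ioc_right hxy).eventuallyLE

theorem two_mul_div_le_one_div_add_one {n p k : ℝ} (hn : 0 < n) (hp : 1 < p) (hk : 0 < k)
    (hk' : k ≤ n * (p - 1) / ((n - 2) * p + n)) :
    2 * ((n - 1) * p / (n * (p - 1))) ≤ 1 / k + 1 := by
  have hnp : 0 < n * (p - 1) := mul_pos hn (by linarith)
  have hD : 0 < (n - 2) * p + n := by
    by_contra! hD
    exact absurd (hk.trans_le hk') (not_lt.2 (div_nonpos_of_nonneg_of_nonpos hnp.le hD))
  have hk_inv : ((n - 2) * p + n) / (n * (p - 1)) ≤ 1 / k := by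
    simpa only [one_div_div] using one_div_le_one_div_of_le hk hk'
  have h2γ : 2 * ((n - 1) * p / (n * (p - 1))) = ((n - 2) * p + n) / (n * (p - 1)) + 1 := by
    rw [div_add_one hnp.ne', mul_div_assoc', div_left_inj' hnp.ne']
    ring
  linarith

variable {δ : ℝ} {φ : ℝ → ℝ}

theorem setIntegral_Ioc_rpow_mul_eq {l : ℝ} (hl : 0 < l) :
    ∫ ω in Ioc 0 l, ω ^ δ * φ ω = l ^ (δ + 1) * ∫ t in Ioc 0 1, t ^ δ * φ (l * t) := by
  rw [← intervalIntegral.integral_of_le hl.le, ← intervalIntegral.integral_of_le zero_le_one]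
  have hscale : ∫ t in (0 : ℝ)..1, (l * t) ^ δ * φ (l * t) =
      l⁻¹ * ∫ ω in (0 : ℝ)..l, ω ^ δ * φ ω := by
    simpa using
      intervalIntegral.integral_comp_mul_left (a := 0) (b := 1) (fun ω => ω ^ δ * φ ω) hl.ne'
  have hsplit : ∫ t in (0 : ℝ)..1, (l * t) ^ δ * φ (l * t) =
      l ^ δ * ∫ t in (0 : ℝ)..1, t ^ δ * φ (l * t) := by
    rw [← intervalIntegral.integral_const_mul]
    refine intervalIntegral.integral_congr fun t ht => ?_
    rw [uIcc_of_le zero_le_one] at ht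
    simp only [Real.mul_rpow hl.le ht.1, mul_assoc]
  rw [Real.rpow_add_one hl.ne', mul_right_comm, ← hsplit, hscale]
  field_simp

theorem integrableOn_rpow_mul_comp_mul (hδ : -1 < δ) (hφ : Monotone φ) (hφ₀ : ∀ x, 0 ≤ φ x)
    {l : ℝ} (hl : 0 ≤ l) : IntegrableOn (fun t => t ^ δ * φ (l * t)) (Ioc 0 1) := by
  have hrpow : IntegrableOn (fun t : ℝ => t ^ δ) (Ioc 0 1) :=
    (intervalIntegrable_iff_integrableOn_Ioc_of_le zero_le_one).mp
      (intervalIntegral.intervalIntegrable_rpow' hδ)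
  refine hrpow.mul_bdd (c := φ l)
    (hφ.measurable.comp (measurable_const_mul l)).aestronglyMeasurable
    ((ae_restrict_iff' measurableSet_Ioc).mpr (.of_forall fun t ht => ?_))
  rw [Real.norm_of_nonneg (hφ₀ _)]
  exact hφ (mul_le_of_le_one_right hl ht.2)

theorem monotoneOn_setIntegral_rpow_mul_comp_mul (hδ : -1 < δ) (hφ : Monotone φ)
    (hφ₀ : ∀ x, 0 ≤ φ x) : MonotoneOn (fun l => ∫ t in Ioc 0 1, t ^ δ * φ (l * t)) (Ici 0) :=
  fun _ ha _ hb hab =>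
  setIntegral_mono_on (integrableOn_rpow_mul_comp_mul hδ hφ hφ₀ ha)
    (integrableOn_rpow_mul_comp_mul hδ hφ hφ₀ hb) measurableSet_Ioc fun _ ht =>
    mul_le_mul_of_nonneg_left (hφ (mul_le_mul_of_nonneg_right hab ht.1.le))
      (Real.rpow_nonneg ht.1.le δ)

theorem monotoneOn_setIntegral_rpow_mul_mul_rpow_neg {γ : ℝ} (hδ : -1 < δ) (hγ : γ ≤ δ + 1)
    (hφ : Monotone φ) (hφ₀ : ∀ x, 0 ≤ φ x) :
    MonotoneOn (fun l => (∫ ω in Ioc 0 l, ω ^ δ * φ ω) * l ^ (-γ)) (Ioi 0) := by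
  have hprod : MonotoneOn ((fun l => l ^ (δ + 1 - γ)) * fun l => ∫ t in Ioc 0 1, t ^ δ * φ (l * t))
      (Ioi 0) :=
    MonotoneOn.mul (fun _ ha _ _ hab => Real.rpow_le_rpow (le_of_lt ha) hab (by linarith))
      ((monotoneOn_setIntegral_rpow_mul_comp_mul hδ hφ hφ₀).mono Ioi_subset_Ici_self)
      (fun l hl => Real.rpow_nonneg (le_of_lt hl) _)
      (fun _ _ => setIntegral_nonneg measurableSet_Ioc fun t ht =>
        mul_nonneg (Real.rpow_nonneg ht.1.le δ) (hφ₀ _))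
  refine hprod.congr fun l (hl : 0 < l) => ?_
  rw [Pi.mul_apply, setIntegral_Ioc_rpow_mul_eq hl, mul_right_comm, ← Real.rpow_add hl,
    sub_eq_add_neg]

theorem h_monotone_general (n : ℕ) (hn : 2 ≤ n) (p k : ℝ) (hp : 1 < p) (hk : 0 < k)
    (hk' : k ≤ n * (p - 1) / ((n - 2) * p + n))
    (fstar : ℝ → ℝ) (hf_nonneg : ∀ s, 0 ≤ fstar s)
    (hf_loc : LocallyIntegrable fstar)
    (δ : ℝ) (hδ : δ = 1 / k - (n - 1) * p / (n * (p - 1)))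
    (F : ℝ → ℝ)
    (hF : F = fun l => ∫ ω in Set.Ioc (0 : ℝ) l,
        ω ^ δ * (∫ s in Set.Ioc (0 : ℝ) ω, fstar s) ^ (1 / (p - 1))) :
    ∀ a ∈ Set.Ioi (0 : ℝ), ∀ b ∈ Set.Ioi (0 : ℝ), a ≤ b →
      F a * a ^ (-((n - 1) * p / (n * (p - 1)))) ≤
        F b * b ^ (-((n - 1) * p / (n * (p - 1)))) := by
  have hexp := two_mul_div_le_one_div_add_one (Nat.cast_pos.2 (by omega)) hp hk hk'
  have hk_inv : 0 < 1 / k := by positivity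
  have hG := monotone_setIntegral_Ioc_zero hf_loc hf_nonneg
  have hσ : 0 ≤ 1 / (p - 1) := by simp only [one_div, inv_nonneg, sub_nonneg, hp.le]
  have hG₀ : ∀ x, 0 ≤ ∫ s in Ioc 0 x, fstar s := fun x =>
    setIntegral_nonneg measurableSet_Ioc fun s _ => hf_nonneg s
  subst hF
  exact monotoneOn_setIntegral_rpow_mul_mul_rpow_neg (by linarith) (by linarith)
    (fun x y hxy => Real.rpow_le_rpow (hG₀ x) (hG hxy) hσ) fun x => Real.rpow_nonneg (hG₀ x) _

theorem h_monotone (n : ℕ) (hn : 2 ≤ n) (p k : ℝ) (hp : 1 < p) (hk : 0 < k)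
    (hk' : k ≤ n * (p - 1) / ((n - 2) * p + n))
    (fstar : ℝ → ℝ) (hf_meas : Measurable fstar) (hf_nonneg : ∀ s, 0 ≤ fstar s)
    (hf_loc : LocallyIntegrable fstar)
    (δ : ℝ) (hδ : δ = 1 / k - (n - 1) * p / (n * (p - 1)))
    (F : ℝ → ℝ)
    (hF : F = fun l => ∫ ω in Set.Ioc (0 : ℝ) l,
        ω ^ δ * (∫ s in Set.Ioc (0 : ℝ) ω, fstar s) ^ (1 / (p - 1))) :
    ∀ a ∈ Set.Ioi (0 : ℝ), ∀ b ∈ Set.Ioi (0 : ℝ), a ≤ b →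
      F a * a ^ (-((n - 1) * p / (n * (p - 1)))) ≤
        F b * b ^ (-((n - 1) * p / (n * (p - 1)))) :=
  h_monotone_general n hn p k hp hk hk' fstar hf_nonneg hf_loc δ hδ F hF
end

section
/- Let n ≥ 2, p > 1, α = 1/(p-1), β > 0 and define h(r) = (nβ)^{-α}((1+rⁿ)^{-(n-1)/(n(p-1))} - 1) + ((p-1)/(n^α(p-n)))((1+rⁿ)^{(p-n)/(n(p-1))} - 1) for p ≠ n. Then as r → 0⁺, h(r) = (-(nβ)^{-α}(n-1)/(n(p-1)) + n^{-α-1})·rⁿ + o(rⁿ). In particular, if β < ((n-1)/(p-1))^{p-1}, the coefficient of rⁿ is negative, so h(r) < 0 for all sufficiently small r > 0. -/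
open Asymptotics Filter Topology

/-! Both terms of `h` are of the form `(1 + rⁿ)^δ - 1`, which is `δ rⁿ + o(rⁿ)` by the
first-order Taylor expansion of `(1 + y)^δ` at `y = 0`; collecting the linear terms gives the
coefficient `c`. Factoring `c = n^(-α-1) (1 - β^(-α) (n-1)/(p-1))` shows that `c < 0` exactly
when `β^α < (n-1)/(p-1)`, and then `h r ≤ (c/2) rⁿ < 0` for small `r > 0`. -/

theorem isLittleO_one_add_rpow_sub_one_sub_mul {ι : Type*} {l : Filter ι} {u : ι → ℝ}
    (hu : Tendsto u l (𝓝 0)) (δ : ℝ) :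
    (fun i => (1 + u i) ^ δ - 1 - δ * u i) =o[l] u := by
  have hderiv : HasDerivAt (fun y : ℝ => (1 + y) ^ δ) δ 0 := by
    simpa using ((hasDerivAt_id (0 : ℝ)).const_add 1).rpow_const (p := δ) (by norm_num)
  have hlin := (hasDerivAt_iff_isLittleO.mp hderiv).comp_tendsto hu
  simpa [Function.comp_def, mul_comm] using hlin

theorem eventually_neg_of_isLittleO_sub_mul {ι : Type*} {l : Filter ι} {f g : ι → ℝ} {c : ℝ}
    (hc : c < 0) (hf : (fun i => f i - c * g i) =o[l] g) (hg : ∀ᶠ i in l, 0 < g i) :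
    ∀ᶠ i in l, f i < 0 := by
  filter_upwards [hf.def (c := -c / 2) (by linarith), hg] with i hfi hgi
  rw [Real.norm_eq_abs, Real.norm_eq_abs, abs_of_pos hgi] at hfi
  nlinarith [(abs_le.mp hfi).2]

theorem one_lt_rpow_neg_inv_mul {β K q : ℝ} (hβ : 0 < β) (hK : 0 ≤ K) (hq : 0 < q)
    (hβK : β < K ^ q) : 1 < β ^ (-q⁻¹) * K := by
  have hroot : β ^ q⁻¹ < K := (Real.rpow_inv_lt_iff_of_pos hβ.le hK hq).mpr hβK
  rw [Real.rpow_neg hβ.le, inv_mul_eq_div]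
  exact (one_lt_div (Real.rpow_pos_of_pos hβ _)).mpr hroot

noncomputable def twoBallCoeff (n p β α : ℝ) : ℝ :=
  -(n * β) ^ (-α) * (n - 1) / (n * (p - 1)) + n ^ (-α - 1)

section TwoBallCoeff

variable {n p β : ℝ}

theorem twoBallCoeff_eq_add (hn : 0 < n) (hp : 1 < p) (hpn : p ≠ n) (α : ℝ) :
    twoBallCoeff n p β α = (n * β) ^ (-α) * -((n - 1) / (n * (p - 1)))
      + (p - 1) / (n ^ α * (p - n)) * ((p - n) / (n * (p - 1))) := by
  have hp1 : p - 1 ≠ 0 := by linarith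
  have hpn' : p - n ≠ 0 := sub_ne_zero.mpr hpn
  have hnα : n ^ α ≠ 0 := (Real.rpow_pos_of_pos hn α).ne'
  rw [twoBallCoeff, Real.rpow_sub_one hn.ne', Real.rpow_neg hn.le]
  field_simp

theorem twoBallCoeff_eq_mul (hn : 0 < n) (hβ : 0 < β) (hp : 1 < p) (α : ℝ) :
    twoBallCoeff n p β α = n ^ (-α) / n * (1 - β ^ (-α) * ((n - 1) / (p - 1))) := by
  have hp1 : p - 1 ≠ 0 := by linarith
  rw [twoBallCoeff, Real.mul_rpow hn.le hβ.le, Real.rpow_sub_one hn.ne']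
  field_simp
  ring

theorem twoBallCoeff_neg (hn : 1 < n) (hp : 1 < p) (hβ : 0 < β)
    (hβK : β < ((n - 1) / (p - 1)) ^ (p - 1)) : twoBallCoeff n p β (1 / (p - 1)) < 0 := by
  have hK : 0 ≤ (n - 1) / (p - 1) := div_nonneg (by linarith) (by linarith)
  have hgt := one_lt_rpow_neg_inv_mul hβ hK (by linarith) hβK
  rw [twoBallCoeff_eq_mul (by linarith) hβ hp, one_div]
  exact mul_neg_of_pos_of_neg (by positivity) (by linarith)

end TwoBallCoeff

theorem h_asymptotics (n : ℕ) (hn : 2 ≤ n) (p : ℝ) (hp : 1 < p)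
    (hpn : p ≠ (n : ℝ)) (α : ℝ) (hα : α = 1 / (p - 1)) (β : ℝ) (hβ : 0 < β)
    (h : ℝ → ℝ)
    (hh : h = fun r => ((n : ℝ) * β) ^ (-α) *
        ((1 + r ^ (n : ℕ)) ^ (-(((n : ℝ) - 1) / ((n : ℝ) * (p - 1)))) - 1)
      + (p - 1) / ((n : ℝ) ^ α * (p - n)) *
        ((1 + r ^ (n : ℕ)) ^ ((p - (n : ℝ)) / ((n : ℝ) * (p - 1))) - 1))
    (c : ℝ)
    (hc : c = -((n : ℝ) * β) ^ (-α) * ((n : ℝ) - 1) / ((n : ℝ) * (p - 1))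
        + (n : ℝ) ^ (-α - 1)) :
    (fun r => h r - c * r ^ (n : ℕ)) =o[nhdsWithin 0 (Set.Ioi 0)]
      (fun r => r ^ (n : ℕ)) ∧
    (β < (((n : ℝ) - 1) / (p - 1)) ^ (p - 1) →
      c < 0 ∧ ∃ ε > 0, ∀ r ∈ Set.Ioo (0 : ℝ) ε, h r < 0) := by
  have hn1 : (1 : ℝ) < n := by exact_mod_cast hn
  have hpow : Tendsto (fun r : ℝ => r ^ n) (𝓝[>] 0) (𝓝 0) :=
    ((continuous_pow n).tendsto' 0 0 (zero_pow (by omega))).mono_left nhdsWithin_le_nhds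
  have hlittle : (fun r => h r - c * r ^ n) =o[𝓝[>] 0] (fun r => r ^ n) := by
    rw [hc, ← twoBallCoeff, twoBallCoeff_eq_add (by linarith) hp hpn]
    refine (((isLittleO_one_add_rpow_sub_one_sub_mul hpow
      (-(((n : ℝ) - 1) / (n * (p - 1))))).const_mul_left (((n : ℝ) * β) ^ (-α))).add
      ((isLittleO_one_add_rpow_sub_one_sub_mul hpow ((p - n) / (n * (p - 1)))).const_mul_left
        ((p - 1) / ((n : ℝ) ^ α * (p - n))))).congr_left fun r => ?_
    rw [hh]
    ring
  refine ⟨hlittle, fun hβK => ?_⟩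
  have hc_neg : c < 0 := hc ▸ hα ▸ twoBallCoeff_neg hn1 hp hβ hβK
  have hh_neg := eventually_neg_of_isLittleO_sub_mul hc_neg hlittle
    (eventually_nhdsWithin_of_forall fun r hr => pow_pos hr n)
  exact ⟨hc_neg, (nhdsGT_basis 0).eventually_iff.mp hh_neg⟩
end
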